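/- arXiv:1302.1218 — 5 statements merged into one kernel-verified Lean document; each statement's English description precedes it below -/
import Mathlib

section
/- Under the hypotheses of the energy identity for h (solution of h_t + h_xxxx = V(t) h_x with boundary conditions h(0,t)=1, h_x(0,t)=0, h_xxx(0,t)=-1/2 and decay at infinity), if there exist t₀ ≥ 0 and V₀ > −1 such that V(t) ≥ V₀ for all t ≥ t₀, then the solution cannot exist globally in time in the class C([0,∞); L²(0,∞)) ∩ L²([0,∞); H²(0,∞)); i.e., there is a finite time at which the solution ceases to exist. -/
open MeasureTheory Filter Topology Set

set_option maxHeartbeats 1600000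

lemma exists_cutoff : ∃ C : ℝ, 0 ≤ C ∧ ∀ S : ℝ, 0 < S → ∃ ψ ψd ψdd : ℝ → ℝ,
    (∀ x, HasDerivAt ψ (ψd x) x) ∧ (∀ x, HasDerivAt ψd (ψdd x) x) ∧
    Continuous ψ ∧ Continuous ψd ∧ Continuous ψdd ∧
    (∀ x, x ≤ S → ψ x = 1) ∧ (∀ x, 2*S ≤ x → ψ x = 0) ∧
    (∀ x, 0 ≤ ψ x) ∧ (∀ x, ψ x ≤ 1) ∧
    (∀ x, x < S → ψd x = 0) ∧ (∀ x, 2*S < x → ψd x = 0) ∧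
    (∀ x, |ψd x| ≤ C / S) ∧ (∀ x, |ψdd x| ≤ C / S^2) := by
  classical
  set φ := Real.smoothTransition with hφdef
  have hφ : ContDiff ℝ (⊤:ℕ∞) φ := Real.smoothTransition.contDiff
  have hone : (1 : WithTop ℕ∞) ≤ ((⊤:ℕ∞) : WithTop ℕ∞) := by exact_mod_cast le_top
  set D1 := deriv φ with hD1def
  have hD1 : ContDiff ℝ (⊤:ℕ∞) D1 := (contDiff_infty_iff_deriv.mp hφ).2
  set D2 := deriv D1 with hD2def
  have hD2 : ContDiff ℝ (⊤:ℕ∞) D2 := (contDiff_infty_iff_deriv.mp hD1).2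
  have hdφ : ∀ u, HasDerivAt φ (D1 u) u := fun u =>
    ((contDiff_infty_iff_deriv.mp hφ).1 u).hasDerivAt
  have hdD1 : ∀ u, HasDerivAt D1 (D2 u) u := fun u =>
    ((contDiff_infty_iff_deriv.mp hD1).1 u).hasDerivAt
  -- vanishing of D1, D2 outside (0,1)
  have hD1lt : ∀ u : ℝ, u < 0 → D1 u = 0 := by
    intro u hu
    have hev : φ =ᶠ[nhds u] fun _ => (0:ℝ) := by
      filter_upwards [Iio_mem_nhds hu] with y hy
      exact Real.smoothTransition.zero_of_nonpos (le_of_lt hy)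
    rw [hD1def, hev.deriv_eq, deriv_const]
  have hD1gt : ∀ u : ℝ, 1 < u → D1 u = 0 := by
    intro u hu
    have hev : φ =ᶠ[nhds u] fun _ => (1:ℝ) := by
      filter_upwards [Ioi_mem_nhds hu] with y hy
      exact Real.smoothTransition.one_of_one_le (le_of_lt hy)
    rw [hD1def, hev.deriv_eq, deriv_const]
  have hD2lt : ∀ u : ℝ, u < 0 → D2 u = 0 := by
    intro u hu
    have hev : D1 =ᶠ[nhds u] fun _ => (0:ℝ) := by
      filter_upwards [Iio_mem_nhds hu] with y hy
      exact hD1lt y hy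
    rw [hD2def, hev.deriv_eq, deriv_const]
  have hD2gt : ∀ u : ℝ, 1 < u → D2 u = 0 := by
    intro u hu
    have hev : D1 =ᶠ[nhds u] fun _ => (0:ℝ) := by
      filter_upwards [Ioi_mem_nhds hu] with y hy
      exact hD1gt y hy
    rw [hD2def, hev.deriv_eq, deriv_const]
  -- bound
  obtain ⟨C1, hC1⟩ := (isCompact_Icc (a := (0:ℝ)) (b := 1)).exists_bound_of_continuousOn
    (hD1.continuous.continuousOn)
  obtain ⟨C2, hC2⟩ := (isCompact_Icc (a := (0:ℝ)) (b := 1)).exists_bound_of_continuousOn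
    (hD2.continuous.continuousOn)
  refine ⟨|C1| + |C2|, by positivity, ?_⟩
  have hCb1 : ∀ u, |D1 u| ≤ |C1| + |C2| := by
    intro u
    rcases le_or_gt u 0 with h0 | h0
    · rcases lt_or_eq_of_le h0 with h0 | h0
      · rw [hD1lt u h0]; simp; positivity
      · subst h0
        calc |D1 0| ≤ C1 := by simpa using hC1 0 (by simp)
          _ ≤ |C1| + |C2| := le_trans (le_abs_self _) (by simp [abs_nonneg])
    · rcases le_or_gt u 1 with h1 | h1
      · calc |D1 u| ≤ C1 := by simpa using hC1 u ⟨le_of_lt h0, h1⟩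
          _ ≤ |C1| + |C2| := le_trans (le_abs_self _) (by simp [abs_nonneg])
      · rw [hD1gt u h1]; simp; positivity
  have hCb2 : ∀ u, |D2 u| ≤ |C1| + |C2| := by
    intro u
    rcases lt_or_ge u 0 with h0 | h0
    · rw [hD2lt u h0]; simp; positivity
    · rcases le_or_gt u 1 with h1 | h1
      · calc |D2 u| ≤ C2 := by simpa using hC2 u ⟨h0, h1⟩
          _ ≤ |C1| + |C2| := le_trans (le_abs_self _) (by simp [abs_nonneg])
      · rw [hD2gt u h1]; simp; positivity
  intro S hS
  set g : ℝ → ℝ := fun x => 2 - x / S with hgdef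
  have hdg : ∀ x : ℝ, HasDerivAt g (-S⁻¹) x := by
    intro x
    simpa [hgdef, one_div] using ((hasDerivAt_id x).div_const S).const_sub 2
  refine ⟨fun x => φ (g x), fun x => D1 (g x) * -S⁻¹, fun x => D2 (g x) * -S⁻¹ * -S⁻¹,
    ?_, ?_, ?_, ?_, ?_, ?_, ?_, ?_, ?_, ?_, ?_, ?_, ?_⟩
  · exact fun x => (hdφ (g x)).comp x (hdg x)
  · intro x
    have := ((hdD1 (g x)).comp x (hdg x)).mul_const (-S⁻¹)
    simpa using this
  · exact hφ.continuous.comp (by continuity)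
  · exact (hD1.continuous.comp (by continuity)).mul continuous_const
  · exact ((hD2.continuous.comp (by continuity)).mul continuous_const).mul continuous_const
  · intro x hx
    apply Real.smoothTransition.one_of_one_le
    rw [hgdef]
    have : x / S ≤ 1 := (div_le_one hS).mpr hx
    linarith
  · intro x hx
    apply Real.smoothTransition.zero_of_nonpos
    rw [hgdef]
    have : 2 ≤ x / S := (le_div_iff₀ hS).mpr (by linarith)
    linarith
  · exact fun x => Real.smoothTransition.nonneg _
  · exact fun x => Real.smoothTransition.le_one _
  · intro x hx
    have : 1 < g x := by
      rw [hgdef]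
      have : x / S < 1 := (div_lt_one hS).mpr hx
      simp only []
      linarith
    show D1 (g x) * -S⁻¹ = 0
    rw [hD1gt _ this, zero_mul]
  · intro x hx
    have : g x < 0 := by
      rw [hgdef]
      have : 2 < x / S := (lt_div_iff₀ hS).mpr (by linarith)
      simp only []
      linarith
    show D1 (g x) * -S⁻¹ = 0
    rw [hD1lt _ this, zero_mul]
  · intro x
    rw [abs_mul, abs_neg, abs_inv, abs_of_pos hS, div_eq_mul_inv]
    exact mul_le_mul_of_nonneg_right (hCb1 _) (by positivity)
  · intro x
    rw [abs_mul, abs_mul, abs_neg, abs_inv, abs_of_pos hS]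
    calc |D2 (g x)| * S⁻¹ * S⁻¹ ≤ (|C1| + |C2|) * S⁻¹ * S⁻¹ := by
          apply mul_le_mul_of_nonneg_right _ (by positivity)
          exact mul_le_mul_of_nonneg_right (hCb2 _) (by positivity)
      _ = (|C1| + |C2|) / S ^ 2 := by rw [sq]; ring


lemma myIBP (u u' v v' : ℝ → ℝ) (a b : ℝ)
    (hu : ∀ x, HasDerivAt u (u' x) x) (hv : ∀ x, HasDerivAt v (v' x) x)
    (hu' : Continuous u') (hv' : Continuous v') :
    ∫ x in a..b, u x * v' x
      = u b * v b - u a * v a - ∫ x in a..b, u' x * v x :=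
  intervalIntegral.integral_mul_deriv_eq_deriv_mul (fun x _ => hu x) (fun x _ => hv x)
    (hu'.intervalIntegrable _ _) (hv'.intervalIntegrable _ _)

lemma interval_le_Ioi (f : ℝ → ℝ) (b : ℝ) (hb : 0 ≤ b)
    (h0 : ∀ x, 0 ≤ f x) (hi : IntegrableOn f (Ioi 0)) :
    ∫ x in (0:ℝ)..b, f x ≤ ∫ x in Ioi (0:ℝ), f x := by
  rw [intervalIntegral.integral_of_le hb]
  exact setIntegral_mono_set hi (ae_of_all _ h0)
    (HasSubset.Subset.eventuallyLE Ioc_subset_Ioi_self)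

lemma key_bound
    (f ft : ℝ → ℝ) (Vt : ℝ)
    (hf : ContDiff ℝ ((⊤:ℕ∞) : WithTop ℕ∞) f)
    (hft : Continuous ft)
    (hpde : ∀ x, 0 < x → ft x = Vt * deriv f x - iteratedDeriv 4 f x)
    (hb1 : f 0 = 1) (hb2 : deriv f 0 = 0) (hb3 : iteratedDeriv 3 f 0 = -(1/2))
    (hfL2 : IntegrableOn (fun x => f x ^ 2) (Ioi 0))
    (hf2L2 : IntegrableOn (fun x => (iteratedDeriv 2 f x) ^ 2) (Ioi 0))
    (E G : ℝ) (hE : E = ∫ x in Ioi 0, f x ^ 2)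
    (hG : G = ∫ x in Ioi 0, (iteratedDeriv 2 f x) ^ 2)
    (C S : ℝ) (hC : 0 ≤ C) (hS : 1 ≤ S)
    (ψ ψd ψdd : ℝ → ℝ)
    (hdψ : ∀ x, HasDerivAt ψ (ψd x) x) (hdψd : ∀ x, HasDerivAt ψd (ψdd x) x)
    (hψc : Continuous ψ) (hψdc : Continuous ψd) (hψddc : Continuous ψdd)
    (hψ0 : ψ 0 = 1) (hψL : ψ (3*S) = 0) (hψpos : ∀ x, 0 ≤ ψ x) (hψle : ∀ x, ψ x ≤ 1)
    (hψd0 : ψd 0 = 0) (hψdL : ψd (3*S) = 0)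
    (hψdb : ∀ x, |ψd x| ≤ C / S) (hψddb : ∀ x, |ψdd x| ≤ C / S^2)
    (ψ2 ψ2d ψ2dd : ℝ → ℝ)
    (hdψ2 : ∀ x, HasDerivAt ψ2 (ψ2d x) x) (hdψ2d : ∀ x, HasDerivAt ψ2d (ψ2dd x) x)
    (hψ2c : Continuous ψ2) (hψ2dc : Continuous ψ2d) (hψ2ddc : Continuous ψ2dd)
    (hψ2one : ∀ x, x ≤ 3*S → ψ2 x = 1) (hψ2L : ψ2 (9*S) = 0)
    (hψ2pos : ∀ x, 0 ≤ ψ2 x) (hψ2le : ∀ x, ψ2 x ≤ 1)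
    (hψ2d0 : ψ2d 0 = 0) (hψ2dL : ψ2d (9*S) = 0)
    (hψ2ddb : ∀ x, |ψ2dd x| ≤ C / (3*S)^2) :
    ∫ x in (0:ℝ)..(3*S), (ft x * f x + f x * ft x) * ψ x
      ≤ -(1+Vt) + (1/S) * (C * (|Vt| + 2*C + 4) * (E + G)) := by
  have hS0 : (0:ℝ) < S := lt_of_lt_of_le one_pos hS
  have hL0 : (0:ℝ) ≤ 3*S := by linarith
  have hL20 : (0:ℝ) ≤ 9*S := by linarith
  have hE0 : 0 ≤ E := hE ▸ setIntegral_nonneg measurableSet_Ioi (fun x _ => sq_nonneg _)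
  have hG0 : 0 ≤ G := hG ▸ setIntegral_nonneg measurableSet_Ioi (fun x _ => sq_nonneg _)
  -- derivatives of f
  set f1 := deriv f with hf1def
  have hc1 : ContDiff ℝ ((⊤:ℕ∞) : WithTop ℕ∞) f1 := (contDiff_infty_iff_deriv.mp hf).2
  set f2 := deriv f1 with hf2def
  have hc2 : ContDiff ℝ ((⊤:ℕ∞) : WithTop ℕ∞) f2 := (contDiff_infty_iff_deriv.mp hc1).2
  set f3 := deriv f2 with hf3def
  have hc3 : ContDiff ℝ ((⊤:ℕ∞) : WithTop ℕ∞) f3 := (contDiff_infty_iff_deriv.mp hc2).2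
  set f4 := deriv f3 with hf4def
  have hc4 : ContDiff ℝ ((⊤:ℕ∞) : WithTop ℕ∞) f4 := (contDiff_infty_iff_deriv.mp hc3).2
  have hd0 : ∀ x, HasDerivAt f (f1 x) x := fun x =>
    ((contDiff_infty_iff_deriv.mp hf).1 x).hasDerivAt
  have hd1 : ∀ x, HasDerivAt f1 (f2 x) x := fun x =>
    ((contDiff_infty_iff_deriv.mp hc1).1 x).hasDerivAt
  have hd2 : ∀ x, HasDerivAt f2 (f3 x) x := fun x =>
    ((contDiff_infty_iff_deriv.mp hc2).1 x).hasDerivAt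
  have hd3 : ∀ x, HasDerivAt f3 (f4 x) x := fun x =>
    ((contDiff_infty_iff_deriv.mp hc3).1 x).hasDerivAt
  have hk0 : Continuous f := hf.continuous
  have hk1 : Continuous f1 := hc1.continuous
  have hk2 : Continuous f2 := hc2.continuous
  have hk3 : Continuous f3 := hc3.continuous
  have hk4 : Continuous f4 := hc4.continuous
  have hi2 : iteratedDeriv 2 f = f2 := by
    rw [iteratedDeriv_succ, iteratedDeriv_one]
  have hi3 : iteratedDeriv 3 f = f3 := by
    rw [iteratedDeriv_succ, iteratedDeriv_succ, iteratedDeriv_one]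
  have hi4 : iteratedDeriv 4 f = f4 := by
    rw [iteratedDeriv_succ, iteratedDeriv_succ, iteratedDeriv_succ, iteratedDeriv_one]
  have hb3' : f3 0 = -(1/2) := by rw [← hi3]; exact hb3
  have hf2L2' : IntegrableOn (fun x => f2 x ^ 2) (Ioi 0) := by rwa [hi2] at hf2L2
  have hGint : ∀ b : ℝ, 0 ≤ b → ∫ x in (0:ℝ)..b, f2 x ^ 2 ≤ G := by
    intro b hb
    rw [hG, hi2]
    exact interval_le_Ioi _ b hb (fun x => sq_nonneg _) hf2L2'
  have hEint : ∀ b : ℝ, 0 ≤ b → ∫ x in (0:ℝ)..b, f x ^ 2 ≤ E := by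
    intro b hb
    rw [hE]
    exact interval_le_Ioi _ b hb (fun x => sq_nonneg _) hfL2
  -- gradient L² bound:  ∫_0^{3S} f1² ≤ Q
  set Q : ℝ := (E+G)/2 + C*E with hQdef
  have hQbound : ∫ x in (0:ℝ)..(3*S), f1 x ^ 2 ≤ Q := by
    have hsplit : ∫ x in (0:ℝ)..(9*S), f1 x ^ 2 * ψ2 x
        = (∫ x in (0:ℝ)..(3*S), f1 x ^ 2 * ψ2 x) + ∫ x in (3*S)..(9*S), f1 x ^ 2 * ψ2 x := by
      rw [intervalIntegral.integral_add_adjacent_intervals] <;>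
        exact (((hk1.pow 2).mul hψ2c).intervalIntegrable _ _)
    have h1 : ∫ x in (0:ℝ)..(3*S), f1 x ^ 2 * ψ2 x = ∫ x in (0:ℝ)..(3*S), f1 x ^ 2 := by
      apply intervalIntegral.integral_congr
      intro x hx
      rw [uIcc_of_le hL0] at hx
      show f1 x ^ 2 * ψ2 x = f1 x ^ 2
      rw [hψ2one x hx.2, mul_one]
    have h2 : 0 ≤ ∫ x in (3*S)..(9*S), f1 x ^ 2 * ψ2 x := by
      apply intervalIntegral.integral_nonneg (by linarith)
      exact fun u _ => mul_nonneg (sq_nonneg _) (hψ2pos u)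
    -- identity for ∫ f1² ψ2 over [0, 9S]
    have ibp1 : ∫ x in (0:ℝ)..(9*S), (f1 x * ψ2 x) * f1 x
        = (f1 (9*S) * ψ2 (9*S)) * f (9*S) - (f1 0 * ψ2 0) * f 0
          - ∫ x in (0:ℝ)..(9*S), (f2 x * ψ2 x + f1 x * ψ2d x) * f x :=
      myIBP _ _ _ _ _ _ (fun x => (hd1 x).mul (hdψ2 x)) hd0
        ((hk2.mul hψ2c).add (hk1.mul hψ2dc)) hk1
    have ibp2 : ∫ x in (0:ℝ)..(9*S), ψ2d x * (f1 x * f x + f x * f1 x)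
        = ψ2d (9*S) * (f (9*S) * f (9*S)) - ψ2d 0 * (f 0 * f 0)
          - ∫ x in (0:ℝ)..(9*S), ψ2dd x * (f x * f x) :=
      myIBP _ _ _ _ _ _ hdψ2d (fun x => (hd0 x).mul (hd0 x)) hψ2ddc
        ((hk1.mul hk0).add (hk0.mul hk1))
    rw [hψ2L, hb2] at ibp1
    rw [hψ2dL, hψ2d0] at ibp2
    simp only [zero_mul, mul_zero, sub_zero, zero_sub] at ibp1 ibp2
    -- rewrite LHSs
    have e1 : ∫ x in (0:ℝ)..(9*S), (f1 x * ψ2 x) * f1 x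
        = ∫ x in (0:ℝ)..(9*S), f1 x ^ 2 * ψ2 x :=
      intervalIntegral.integral_congr (fun x _ => by ring)
    have e2 : ∫ x in (0:ℝ)..(9*S), (f2 x * ψ2 x + f1 x * ψ2d x) * f x
        = (∫ x in (0:ℝ)..(9*S), (f x * f2 x) * ψ2 x)
          + ∫ x in (0:ℝ)..(9*S), ψ2d x * (f1 x * f x + f x * f1 x) / 2 := by
      rw [← intervalIntegral.integral_add (((hk0.fun_mul hk2).fun_mul hψ2c).intervalIntegrable _ _)
        (((hψ2dc.fun_mul ((hk1.fun_mul hk0).fun_add (hk0.fun_mul hk1))).div_const 2).intervalIntegrable _ _)]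
      exact intervalIntegral.integral_congr (fun x _ => by ring)
    have e3 : ∫ x in (0:ℝ)..(9*S), ψ2d x * (f1 x * f x + f x * f1 x) / 2
        = (∫ x in (0:ℝ)..(9*S), ψ2d x * (f1 x * f x + f x * f1 x)) / 2 :=
      intervalIntegral.integral_div _ _
    have key : ∫ x in (0:ℝ)..(9*S), f1 x ^ 2 * ψ2 x
        = -(∫ x in (0:ℝ)..(9*S), (f x * f2 x) * ψ2 x)
          + (∫ x in (0:ℝ)..(9*S), ψ2dd x * (f x * f x)) / 2 := by
      rw [← e1, ibp1, e2, e3, ibp2]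
      ring
    -- bounds on the two pieces
    have bnd1 : |∫ x in (0:ℝ)..(9*S), (f x * f2 x) * ψ2 x| ≤ (E + G)/2 := by
      calc |∫ x in (0:ℝ)..(9*S), (f x * f2 x) * ψ2 x|
          ≤ ∫ x in (0:ℝ)..(9*S), |(f x * f2 x) * ψ2 x| :=
            intervalIntegral.abs_integral_le_integral_abs hL20
        _ ≤ ∫ x in (0:ℝ)..(9*S), (f x ^ 2 + f2 x ^ 2) / 2 := by
            apply intervalIntegral.integral_mono_on hL20
              (((hk0.fun_mul hk2).fun_mul hψ2c).abs.intervalIntegrable _ _)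
              ((((hk0.fun_pow 2).fun_add (hk2.fun_pow 2)).div_const 2).intervalIntegrable _ _)
            intro x _
            rw [abs_mul]
            have h2ab : |f x * f2 x| ≤ (f x ^ 2 + f2 x ^ 2) / 2 := by
              rw [abs_mul]
              nlinarith [sq_nonneg (|f x| - |f2 x|), sq_abs (f x), sq_abs (f2 x),
                abs_nonneg (f x), abs_nonneg (f2 x)]
            have hψa : |ψ2 x| ≤ 1 := by
              rw [abs_of_nonneg (hψ2pos x)]; exact hψ2le x
            calc |f x * f2 x| * |ψ2 x| ≤ |f x * f2 x| * 1 :=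
                  mul_le_mul_of_nonneg_left hψa (abs_nonneg _)
              _ = |f x * f2 x| := mul_one _
              _ ≤ (f x ^ 2 + f2 x ^ 2) / 2 := h2ab
        _ = ((∫ x in (0:ℝ)..(9*S), f x ^ 2) + ∫ x in (0:ℝ)..(9*S), f2 x ^ 2) / 2 := by
            rw [intervalIntegral.integral_div, intervalIntegral.integral_add
              ((hk0.fun_pow 2).intervalIntegrable _ _) ((hk2.fun_pow 2).intervalIntegrable _ _)]
        _ ≤ (E + G)/2 := by
            have := hEint (9*S) hL20
            have := hGint (9*S) hL20
            linarith
    have bnd2 : |∫ x in (0:ℝ)..(9*S), ψ2dd x * (f x * f x)| ≤ 2*C*E := by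
      calc |∫ x in (0:ℝ)..(9*S), ψ2dd x * (f x * f x)|
          ≤ ∫ x in (0:ℝ)..(9*S), |ψ2dd x * (f x * f x)| :=
            intervalIntegral.abs_integral_le_integral_abs hL20
        _ ≤ ∫ x in (0:ℝ)..(9*S), C * f x ^ 2 := by
            apply intervalIntegral.integral_mono_on hL20
              ((hψ2ddc.fun_mul (hk0.fun_mul hk0)).abs.intervalIntegrable _ _)
              ((continuous_const.fun_mul (hk0.fun_pow 2)).intervalIntegrable _ _)
            intro x _
            rw [abs_mul]
            have h1 : |ψ2dd x| ≤ C := by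
              refine le_trans (hψ2ddb x) ?_
              have h9 : (1:ℝ) ≤ (3*S)^2 := by nlinarith
              rw [div_le_iff₀ (by positivity)]
              exact le_mul_of_one_le_right hC h9
            have h2 : |f x * f x| = f x ^ 2 := by
              rw [abs_mul, ← sq_abs]; ring_nf
            rw [h2]
            exact mul_le_mul_of_nonneg_right h1 (sq_nonneg _)
        _ = C * ∫ x in (0:ℝ)..(9*S), f x ^ 2 := intervalIntegral.integral_const_mul _ _
        _ ≤ C*E := mul_le_mul_of_nonneg_left (hEint (9*S) hL20) hC
        _ ≤ 2*C*E := by nlinarith [mul_nonneg hC hE0]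
    calc ∫ x in (0:ℝ)..(3*S), f1 x ^ 2
        = ∫ x in (0:ℝ)..(3*S), f1 x ^ 2 * ψ2 x := h1.symm
      _ ≤ ∫ x in (0:ℝ)..(9*S), f1 x ^ 2 * ψ2 x := by rw [hsplit]; linarith
      _ = -(∫ x in (0:ℝ)..(9*S), (f x * f2 x) * ψ2 x)
          + (∫ x in (0:ℝ)..(9*S), ψ2dd x * (f x * f x)) / 2 := key
      _ ≤ (E + G)/2 + C*E := by
          have a1 := neg_le_abs (∫ x in (0:ℝ)..(9*S), (f x * f2 x) * ψ2 x)
          have a2 := le_abs_self (∫ x in (0:ℝ)..(9*S), ψ2dd x * (f x * f x))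
          linarith
      _ = Q := hQdef.symm
  -- the main identity over [0, 3S]
  set IL := ∫ x in (0:ℝ)..(3*S), (ft x * f x + f x * ft x) * ψ x with hILdef
  set TV := ∫ x in (0:ℝ)..(3*S), (Vt * ψd x) * (f x * f x) with hTVdef
  set T2 := ∫ x in (0:ℝ)..(3*S), 2 * f2 x ^ 2 * ψ x with hT2def
  set T3 := ∫ x in (0:ℝ)..(3*S), (2 * (f1 x * f2 x)) * ψd x with hT3def
  set T4 := ∫ x in (0:ℝ)..(3*S), (2 * (f x * f2 x)) * ψdd x with hT4def
  have ipde : IL = (∫ x in (0:ℝ)..(3*S), (Vt * ψ x) * (f1 x * f x + f x * f1 x))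
      - ∫ x in (0:ℝ)..(3*S), (2 * f x * ψ x) * f4 x := by
    rw [hILdef, ← intervalIntegral.integral_sub
      (((continuous_const.fun_mul hψc).fun_mul ((hk1.fun_mul hk0).fun_add (hk0.fun_mul hk1))).intervalIntegrable _ _)
      ((((continuous_const.fun_mul hk0).fun_mul hψc).fun_mul hk4).intervalIntegrable _ _)]
    apply intervalIntegral.integral_congr_ae
    apply ae_of_all
    intro x hx
    have hx0 : 0 < x := by
      rw [uIoc_of_le hL0] at hx; exact hx.1
    have := hpde x hx0
    rw [hi4] at this
    rw [this]
    ring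
  have ibpC : (∫ x in (0:ℝ)..(3*S), (Vt * ψ x) * (f1 x * f x + f x * f1 x)) = -Vt - TV := by
    have := myIBP (fun x => Vt * ψ x) (fun x => Vt * ψd x) (fun x => f x * f x)
      (fun x => f1 x * f x + f x * f1 x) 0 (3*S)
      (fun x => (hdψ x).const_mul Vt) (fun x => (hd0 x).mul (hd0 x))
      (continuous_const.mul hψdc) ((hk1.mul hk0).add (hk0.mul hk1))
    beta_reduce at this
    rw [hψL, hψ0, hb1] at this
    rw [this, ← hTVdef]
    ring
  have ibpD : (∫ x in (0:ℝ)..(3*S), (2 * f x * ψ x) * f4 x)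
      = 1 + (T2 + T3) + (T3 + T4) := by
    have e0 := myIBP (fun x => 2 * f x * ψ x) (fun x => 2 * f1 x * ψ x + 2 * f x * ψd x)
      f3 f4 0 (3*S)
      (fun x => ((hd0 x).const_mul 2).mul (hdψ x)) hd3
      (((continuous_const.mul hk1).mul hψc).add ((continuous_const.mul hk0).mul hψdc)) hk4
    beta_reduce at e0
    rw [hψL, hψ0, hb1, hb3'] at e0
    have esplit : (∫ x in (0:ℝ)..(3*S), (2 * f1 x * ψ x + 2 * f x * ψd x) * f3 x)
        = (∫ x in (0:ℝ)..(3*S), (2 * f1 x * ψ x) * f3 x)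
          + ∫ x in (0:ℝ)..(3*S), (2 * f x * ψd x) * f3 x := by
      rw [← intervalIntegral.integral_add
        ((((continuous_const.fun_mul hk1).fun_mul hψc).fun_mul hk3).intervalIntegrable _ _)
        ((((continuous_const.fun_mul hk0).fun_mul hψdc).fun_mul hk3).intervalIntegrable _ _)]
      exact intervalIntegral.integral_congr (fun x _ => by ring)
    have e2 := myIBP (fun x => 2 * f1 x * ψ x) (fun x => 2 * f2 x * ψ x + 2 * f1 x * ψd x)
      f2 f3 0 (3*S)
      (fun x => ((hd1 x).const_mul 2).mul (hdψ x)) hd2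
      (((continuous_const.mul hk2).mul hψc).add ((continuous_const.mul hk1).mul hψdc)) hk3
    beta_reduce at e2
    rw [hψL, hψ0, hb2] at e2
    have e2s : (∫ x in (0:ℝ)..(3*S), (2 * f2 x * ψ x + 2 * f1 x * ψd x) * f2 x)
        = T2 + T3 := by
      rw [hT2def, hT3def, ← intervalIntegral.integral_add
        (((continuous_const.fun_mul (hk2.fun_pow 2)).fun_mul hψc).intervalIntegrable _ _)
        (((continuous_const.fun_mul (hk1.fun_mul hk2)).fun_mul hψdc).intervalIntegrable _ _)]
      exact intervalIntegral.integral_congr (fun x _ => by ring)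
    have e3 := myIBP (fun x => 2 * f x * ψd x) (fun x => 2 * f1 x * ψd x + 2 * f x * ψdd x)
      f2 f3 0 (3*S)
      (fun x => ((hd0 x).const_mul 2).mul (hdψd x)) hd2
      (((continuous_const.mul hk1).mul hψdc).add ((continuous_const.mul hk0).mul hψddc)) hk3
    beta_reduce at e3
    rw [hψdL, hψd0] at e3
    have e3s : (∫ x in (0:ℝ)..(3*S), (2 * f1 x * ψd x + 2 * f x * ψdd x) * f2 x)
        = T3 + T4 := by
      rw [hT3def, hT4def, ← intervalIntegral.integral_add
        (((continuous_const.fun_mul (hk1.fun_mul hk2)).fun_mul hψdc).intervalIntegrable _ _)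
        (((continuous_const.fun_mul (hk0.fun_mul hk2)).fun_mul hψddc).intervalIntegrable _ _)]
      exact intervalIntegral.integral_congr (fun x _ => by ring)
    rw [e2s] at e2
    rw [e3s] at e3
    rw [esplit, e2, e3] at e0
    rw [e0]
    ring
  have main_eq : IL = -Vt - TV - 1 - T2 - T3 - T3 - T4 := by
    rw [ipde, ibpC, ibpD]; ring
  -- bounds
  have hT2pos : 0 ≤ T2 := by
    rw [hT2def]
    apply intervalIntegral.integral_nonneg hL0
    intro u _
    have := hψpos u
    positivity
  have habs2 : ∀ a b c bnd : ℝ, |c| ≤ bnd → |2 * (a * b) * c| ≤ bnd * (a^2 + b^2) := by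
    intro a b c bnd hc
    have hbnd : 0 ≤ bnd := le_trans (abs_nonneg c) hc
    rw [abs_mul]
    calc |2 * (a * b)| * |c| ≤ (a^2+b^2) * bnd := by
          apply mul_le_mul _ hc (abs_nonneg _) (by positivity)
          rw [abs_mul, abs_mul]
          have : |a| * |b| * 2 ≤ a^2 + b^2 := by
            nlinarith [sq_nonneg (|a| - |b|), sq_abs a, sq_abs b]
          calc |(2:ℝ)| * (|a| * |b|) = |a| * |b| * 2 := by
                rw [abs_two]; ring
            _ ≤ a^2 + b^2 := this
      _ = bnd * (a^2+b^2) := by ring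
  have pairbound : ∀ (w : ℝ → ℝ) (g1 g2 : ℝ → ℝ) (bnd B1 B2 : ℝ),
      Continuous w → Continuous g1 → Continuous g2 → (∀ x, |w x| ≤ bnd) →
      (∫ x in (0:ℝ)..(3*S), g1 x ^ 2 ≤ B1) → (∫ x in (0:ℝ)..(3*S), g2 x ^ 2 ≤ B2) →
      |∫ x in (0:ℝ)..(3*S), (2 * (g1 x * g2 x)) * w x| ≤ bnd * (B1 + B2) := by
    intro w g1 g2 bnd B1 B2 hw hg1 hg2 hwb hB1 hB2
    have hbnd : 0 ≤ bnd := le_trans (abs_nonneg _) (hwb 0)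
    calc |∫ x in (0:ℝ)..(3*S), (2 * (g1 x * g2 x)) * w x|
        ≤ ∫ x in (0:ℝ)..(3*S), |(2 * (g1 x * g2 x)) * w x| :=
          intervalIntegral.abs_integral_le_integral_abs hL0
      _ ≤ ∫ x in (0:ℝ)..(3*S), bnd * (g1 x ^2 + g2 x ^2) := by
          apply intervalIntegral.integral_mono_on hL0
            (((continuous_const.mul (hg1.mul hg2)).mul hw).abs.intervalIntegrable _ _)
            ((continuous_const.mul ((hg1.pow 2).add (hg2.pow 2))).intervalIntegrable _ _)
          intro x _
          exact habs2 _ _ _ _ (hwb x)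
      _ = bnd * ((∫ x in (0:ℝ)..(3*S), g1 x ^2) + ∫ x in (0:ℝ)..(3*S), g2 x ^2) := by
          rw [intervalIntegral.integral_const_mul, intervalIntegral.integral_add
            ((hg1.fun_pow 2).intervalIntegrable _ _) ((hg2.fun_pow 2).intervalIntegrable _ _)]
      _ ≤ bnd * (B1 + B2) := by
          apply mul_le_mul_of_nonneg_left _ hbnd
          exact add_le_add hB1 hB2
  have hT3b : |T3| ≤ (C/S) * (Q + G) :=
    pairbound ψd f1 f2 (C/S) Q G hψdc hk1 hk2 hψdb hQbound (hGint _ hL0)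
  have hCS2 : ∀ x, |ψdd x| ≤ C/S := by
    intro x
    refine le_trans (hψddb x) ?_
    apply div_le_div_of_nonneg_left hC ?_ ?_ <;> nlinarith
  have hT4b : |T4| ≤ (C/S) * (E + G) :=
    pairbound ψdd f f2 (C/S) E G hψddc hk0 hk2 hCS2 (hEint _ hL0) (hGint _ hL0)
  have hTVb : |TV| ≤ (C/S) * (|Vt| * E) := by
    calc |TV| ≤ ∫ x in (0:ℝ)..(3*S), |(Vt * ψd x) * (f x * f x)| := by
          rw [hTVdef]
          exact intervalIntegral.abs_integral_le_integral_abs hL0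
      _ ≤ ∫ x in (0:ℝ)..(3*S), (|Vt| * (C/S)) * f x ^2 := by
          apply intervalIntegral.integral_mono_on hL0
            (((continuous_const.fun_mul hψdc).fun_mul (hk0.fun_mul hk0)).abs.intervalIntegrable _ _)
            ((continuous_const.fun_mul (hk0.fun_pow 2)).intervalIntegrable _ _)
          intro x _
          rw [abs_mul, abs_mul]
          have h2 : |f x * f x| = f x ^ 2 := by rw [abs_mul, ← sq_abs]; ring_nf
          rw [h2]
          apply mul_le_mul_of_nonneg_right _ (sq_nonneg _)
          exact mul_le_mul_of_nonneg_left (hψdb x) (abs_nonneg _)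
      _ = (|Vt| * (C/S)) * ∫ x in (0:ℝ)..(3*S), f x ^2 :=
          intervalIntegral.integral_const_mul _ _
      _ ≤ (|Vt| * (C/S)) * E := by
          apply mul_le_mul_of_nonneg_left (hEint _ hL0) (by positivity)
      _ = (C/S) * (|Vt| * E) := by ring
  -- conclude
  have hr0 : (0:ℝ) < 1/S := by positivity
  have hTV1 := (abs_le.mp hTVb).1
  have hT31 := (abs_le.mp hT3b).1
  have hT41 := (abs_le.mp hT4b).1
  have hCS : C/S = C * (1/S) := by ring
  rw [main_eq]
  rw [hCS] at hTV1 hT31 hT41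
  rw [hQdef] at hT31
  nlinarith [mul_nonneg (mul_nonneg hr0.le hC) hE0,
    mul_nonneg (mul_nonneg hr0.le hC) hG0,
    mul_nonneg (mul_nonneg hr0.le hC) (mul_nonneg (abs_nonneg Vt) hG0),
    mul_nonneg (mul_nonneg hr0.le hC) (mul_nonneg hC hG0),
    mul_nonneg (mul_nonneg hr0.le hC) (mul_nonneg hC hE0)]


/-- If `V(t) ≥ V₀ > -1` for all `t ≥ t₀`, then a global solution of the boundary-value
problem in the class `C([0,∞);L²) ∩ L²([0,∞);H²)` cannot exist. -/
theorem no_global_solution_h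
    (h : ℝ → ℝ → ℝ) (V : ℝ → ℝ)
    (hV : ContinuousOn V (Ici 0))
    (hsmooth : ContDiff ℝ (⊤ : ℕ∞) (fun p : ℝ × ℝ => h p.1 p.2))
    (hpde : ∀ x t : ℝ, 0 < x → 0 ≤ t →
      deriv (fun s => h x s) t + iteratedDeriv 4 (fun y => h y t) x
        = V t * deriv (fun y => h y t) x)
    (hbc1 : ∀ t ≥ (0:ℝ), h 0 t = 1)
    (hbc2 : ∀ t ≥ (0:ℝ), deriv (fun y => h y t) 0 = 0)
    (hbc3 : ∀ t ≥ (0:ℝ), iteratedDeriv 3 (fun y => h y t) 0 = -(1/2))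
    (hdecay : ∀ t ≥ (0:ℝ), ∀ k ≤ 2,
      Tendsto (fun x => iteratedDeriv k (fun y => h y t) x) atTop (𝓝 0))
    -- the class C([0,∞);L²(0,∞)) ∩ L²([0,∞);H²(0,∞)):
    (hL2 : ∀ t ≥ (0:ℝ), IntegrableOn (fun x => (h x t) ^ 2) (Ioi 0))
    (hL2xx : ∀ t ≥ (0:ℝ),
      IntegrableOn (fun x => (iteratedDeriv 2 (fun y => h y t) x) ^ 2) (Ioi 0))
    (hCt : Continuous (fun t => ∫ x in Ioi (0:ℝ), (h x t) ^ 2))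
    (hL2t : IntegrableOn
      (fun t => ∫ x in Ioi (0:ℝ), (iteratedDeriv 2 (fun y => h y t) x) ^ 2) (Ici 0))
    -- the lower bound on the speed:
    (t₀ V₀ : ℝ) (ht₀ : 0 ≤ t₀) (hV₀ : -1 < V₀)
    (hVbound : ∀ t ≥ t₀, V₀ ≤ V t) :
    False := by
  classical
  have hone : (1 : WithTop ℕ∞) ≤ ((⊤:ℕ∞) : WithTop ℕ∞) := by exact_mod_cast le_top
  have hsm : ContDiff ℝ ((⊤:ℕ∞) : WithTop ℕ∞) (fun p : ℝ × ℝ => h p.1 p.2) :=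
    hsmooth.of_le (by simp)
  have hder : ∀ x t : ℝ, HasDerivAt (fun s => h x s)
      ((fderiv ℝ (fun p : ℝ × ℝ => h p.1 p.2) (x,t)) (0,1)) t := by
    intro x t
    have hH : HasFDerivAt (fun p : ℝ × ℝ => h p.1 p.2)
        (fderiv ℝ (fun p : ℝ × ℝ => h p.1 p.2) (x,t)) (x,t) :=
      ((hsm.differentiable (by simp)) (x,t)).hasFDerivAt
    exact hH.comp_hasDerivAt t ((hasDerivAt_const t x).prodMk (hasDerivAt_id t))
  have hdteq : ∀ x t : ℝ, deriv (fun s => h x s) t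
      = (fderiv ℝ (fun p : ℝ × ℝ => h p.1 p.2) (x,t)) (0,1) := fun x t => (hder x t).deriv
  have hdtcont : Continuous (fun p : ℝ × ℝ => deriv (fun s => h p.1 s) p.2) := by
    have h2 : Continuous (fun p : ℝ × ℝ =>
        (fderiv ℝ (fun q : ℝ × ℝ => h q.1 q.2) p) ((0:ℝ),(1:ℝ))) :=
      (hsm.continuous_fderiv (by simp)).clm_apply continuous_const
    convert h2 using 2 with p
    exact hdteq p.1 p.2
  have hder' : ∀ x t : ℝ, HasDerivAt (fun s => h x s) (deriv (fun s => h x s) t) t := by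
    intro x t; rw [hdteq]; exact hder x t
  have hft : ∀ t : ℝ, ContDiff ℝ ((⊤:ℕ∞) : WithTop ℕ∞) (fun y => h y t) :=
    fun t => hsm.comp (contDiff_id.prodMk contDiff_const)
  -- energies
  set E : ℝ → ℝ := fun t => ∫ x in Ioi (0:ℝ), (h x t) ^ 2 with hEdef
  set g : ℝ → ℝ := fun t => ∫ x in Ioi (0:ℝ), (iteratedDeriv 2 (fun y => h y t) x) ^ 2
    with hgdef
  obtain ⟨C, hC, hcut⟩ := exists_cutoff
  have h1V : (0:ℝ) < 1 + V₀ := by linarith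
  set A : ℝ := ∫ t in (0:ℝ)..t₀, (1 + V t) with hAdef
  set T : ℝ := t₀ + (|E 0| + |A| + 2)/(1+V₀) with hTdef
  have hTt₀ : t₀ ≤ T := by
    rw [hTdef]
    have : 0 ≤ (|E 0| + |A| + 2)/(1+V₀) := by positivity
    linarith
  have hT0 : 0 ≤ T := le_trans ht₀ hTt₀
  have hVint : ∀ a b : ℝ, 0 ≤ a → a ≤ b → IntervalIntegrable (fun t => 1 + V t) volume a b := by
    intro a b ha hab
    apply ContinuousOn.intervalIntegrable
    apply ContinuousOn.add continuousOn_const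
    apply hV.mono
    rw [uIcc_of_le hab]
    intro s hs
    exact le_trans ha hs.1
  have hIV : E 0 + 2 ≤ ∫ t in (0:ℝ)..T, (1 + V t) := by
    have hadd : (∫ t in (0:ℝ)..T, (1 + V t)) = A + ∫ t in t₀..T, (1 + V t) := by
      rw [hAdef, intervalIntegral.integral_add_adjacent_intervals
        (hVint 0 t₀ le_rfl ht₀) (hVint t₀ T ht₀ hTt₀)]
    have hlow : (1+V₀) * (T - t₀) ≤ ∫ t in t₀..T, (1 + V t) := by
      have hm : ∫ t in t₀..T, (1+V₀) ≤ ∫ t in t₀..T, (1 + V t) := by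
        apply intervalIntegral.integral_mono_on hTt₀ intervalIntegrable_const
          (hVint t₀ T ht₀ hTt₀)
        intro s hs
        have := hVbound s hs.1
        linarith
      rwa [intervalIntegral.integral_const, smul_eq_mul, mul_comm] at hm
    have hval : (1+V₀) * (T - t₀) = |E 0| + |A| + 2 := by
      rw [hTdef]; field_simp; ring
    have h1 : E 0 ≤ |E 0| := le_abs_self _
    have h2 : -|A| ≤ A := neg_abs_le _
    linarith
  -- weight function and its time integral
  set W : ℝ → ℝ := fun t => (C * (|V t| + 2*C + 4)) * (E t + g t) with hWdef
  have hgIcc : IntegrableOn g (Icc 0 T) := hL2t.mono_set (fun s hs => hs.1)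
  have hEIcc : IntegrableOn E (Icc 0 T) := hCt.integrableOn_Icc
  have hWIcc : IntegrableOn W (Icc 0 T) := by
    apply IntegrableOn.continuousOn_mul ?_ (hEIcc.add hgIcc) isCompact_Icc
    apply ContinuousOn.mul continuousOn_const
    apply ContinuousOn.add (ContinuousOn.add ?_ continuousOn_const) continuousOn_const
    exact (hV.mono (fun s hs => hs.1)).abs
  have hWint : IntervalIntegrable W volume 0 T := by
    rw [intervalIntegrable_iff_integrableOn_Ioc_of_le hT0]
    exact hWIcc.mono_set Ioc_subset_Icc_self
  set M : ℝ := ∫ t in (0:ℝ)..T, W t with hMdef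
  set S : ℝ := max 1 M with hSdef
  have hS1 : (1:ℝ) ≤ S := le_max_left _ _
  have hS0 : (0:ℝ) < S := lt_of_lt_of_le one_pos hS1
  have hMS : (1/S) * M ≤ 1 := by
    have hd : M / S ≤ 1 := (div_le_one hS0).mpr (le_max_right 1 M)
    calc (1/S)*M = M/S := by ring
      _ ≤ 1 := hd
  have h3S0 : (0:ℝ) ≤ 3*S := by linarith
  obtain ⟨ψ, ψd, ψdd, hdψ, hdψd, hψc, hψdc, hψddc, hψone, hψzero, hψpos, hψle,
    hψdlow, hψdhigh, hψdb, hψddb⟩ := hcut S hS0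
  obtain ⟨ψ2, ψ2d, ψ2dd, hdψ2, hdψ2d, hψ2c, hψ2dc, hψ2ddc, hψ2one, hψ2zero, hψ2pos, hψ2le,
    hψ2dlow, hψ2dhigh, hψ2db, hψ2ddb⟩ := hcut (3*S) (by linarith)
  -- Fubini integrand
  set F : ℝ → ℝ → ℝ := fun x t =>
    (deriv (fun s => h x s) t * h x t + h x t * deriv (fun s => h x s) t) * ψ x with hFdef
  have hFcont : Continuous (fun p : ℝ × ℝ => F p.1 p.2) := by
    have he : (fun p : ℝ × ℝ => F p.1 p.2) = fun p : ℝ × ℝ =>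
        (deriv (fun s => h p.1 s) p.2 * h p.1 p.2 + h p.1 p.2 * deriv (fun s => h p.1 s) p.2)
          * ψ p.1 := by
      funext p; rw [hFdef]
    rw [he]
    exact ((hdtcont.mul hsm.continuous).add (hsm.continuous.mul hdtcont)).mul
      (hψc.comp continuous_fst)
  have hFTC : ∀ x : ℝ, ∫ t in (0:ℝ)..T, F x t
      = (h x T * h x T) * ψ x - (h x 0 * h x 0) * ψ x := by
    intro x
    have hd : ∀ t ∈ uIcc (0:ℝ) T, HasDerivAt (fun s => h x s * h x s * ψ x) (F x t) t := by
      intro t _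
      show HasDerivAt _ (F x t) t
      rw [hFdef]
      exact ((hder' x t).mul (hder' x t)).mul_const (ψ x)
    have hci : Continuous (fun t => F x t) :=
      hFcont.comp (continuous_const.prodMk continuous_id)
    have := intervalIntegral.integral_eq_sub_of_hasDerivAt hd (hci.intervalIntegrable 0 T)
    simpa using this
  -- product integrability and Fubini
  have hprodInt : Integrable (Function.uncurry F)
      ((volume.restrict (Ioc (0:ℝ) (3*S))).prod (volume.restrict (Ioc (0:ℝ) T))) := by
    rw [Measure.prod_restrict]
    have hc : Continuous (Function.uncurry F) := hFcont
    have hK : IsCompact ((Icc (0:ℝ) (3*S)) ×ˢ (Icc (0:ℝ) T)) :=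
      isCompact_Icc.prod isCompact_Icc
    have h1 : IntegrableOn (Function.uncurry F) ((Icc (0:ℝ) (3*S)) ×ˢ (Icc (0:ℝ) T))
        (volume.prod volume) := by
      rw [← Measure.volume_eq_prod]
      exact hc.continuousOn.integrableOn_compact hK
    exact h1.mono_set (prod_mono Ioc_subset_Icc_self Ioc_subset_Icc_self)
  have hswap : (∫ x in (0:ℝ)..(3*S), ∫ t in (0:ℝ)..T, F x t)
      = ∫ t in (0:ℝ)..T, ∫ x in (0:ℝ)..(3*S), F x t := by
    rw [intervalIntegral.integral_of_le h3S0, intervalIntegral.integral_of_le hT0]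
    simp_rw [intervalIntegral.integral_of_le hT0, intervalIntegral.integral_of_le h3S0]
    exact MeasureTheory.integral_integral_swap hprodInt
  have hmarg : IntervalIntegrable (fun t => ∫ x in (0:ℝ)..(3*S), F x t) volume 0 T := by
    have h1 : Integrable (fun t => ∫ x, F x t ∂(volume.restrict (Ioc (0:ℝ) (3*S))))
        (volume.restrict (Ioc (0:ℝ) T)) := hprodInt.integral_prod_right
    rw [intervalIntegrable_iff_integrableOn_Ioc_of_le hT0]
    have he : (fun t => ∫ x in (0:ℝ)..(3*S), F x t)
        = fun t => ∫ x, F x t ∂(volume.restrict (Ioc (0:ℝ) (3*S))) := by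
      funext t; rw [intervalIntegral.integral_of_le h3S0]
    rw [he]
    exact h1
  -- lower bound for the space integral
  have hlow2 : -(E 0) ≤ ∫ x in (0:ℝ)..(3*S),
      ((h x T * h x T) * ψ x - (h x 0 * h x 0) * ψ x) := by
    have hcT : Continuous (fun y => h y T) := (hft T).continuous
    have hc0 : Continuous (fun y => h y 0) := (hft 0).continuous
    have hs : (∫ x in (0:ℝ)..(3*S), ((h x T * h x T) * ψ x - (h x 0 * h x 0) * ψ x))
        = (∫ x in (0:ℝ)..(3*S), (h x T * h x T) * ψ x)
          - ∫ x in (0:ℝ)..(3*S), (h x 0 * h x 0) * ψ x := by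
      apply intervalIntegral.integral_sub
      · exact (((hcT.mul hcT).mul hψc).intervalIntegrable _ _)
      · exact (((hc0.mul hc0).mul hψc).intervalIntegrable _ _)
    have h1 : 0 ≤ ∫ x in (0:ℝ)..(3*S), (h x T * h x T) * ψ x :=
      intervalIntegral.integral_nonneg h3S0
        (fun u _ => mul_nonneg (mul_self_nonneg _) (hψpos u))
    have h2 : (∫ x in (0:ℝ)..(3*S), (h x 0 * h x 0) * ψ x) ≤ E 0 := by
      calc (∫ x in (0:ℝ)..(3*S), (h x 0 * h x 0) * ψ x)
          ≤ ∫ x in (0:ℝ)..(3*S), (h x 0) ^ 2 := by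
            apply intervalIntegral.integral_mono_on h3S0
              (((hc0.mul hc0).mul hψc).intervalIntegrable _ _)
              ((hc0.pow 2).intervalIntegrable _ _)
            intro x _
            calc (h x 0 * h x 0) * ψ x ≤ (h x 0 * h x 0) * 1 :=
                  mul_le_mul_of_nonneg_left (hψle x) (mul_self_nonneg _)
              _ = (h x 0) ^ 2 := by ring
        _ ≤ E 0 := interval_le_Ioi _ _ h3S0 (fun x => sq_nonneg _) (hL2 0 le_rfl)
    linarith
  -- the key estimate applied at each time
  have hkey : ∀ t ∈ Icc (0:ℝ) T,
      (∫ x in (0:ℝ)..(3*S), F x t) ≤ -(1 + V t) + (1/S) * W t := by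
    intro t htm
    have ht : 0 ≤ t := htm.1
    have hpde' : ∀ x, 0 < x → deriv (fun s => h x s) t
        = V t * deriv (fun y => h y t) x - iteratedDeriv 4 (fun y => h y t) x := by
      intro x hx
      have := hpde x t hx ht
      linarith
    have hftc : Continuous (fun x => deriv (fun s => h x s) t) :=
      hdtcont.comp (continuous_id.prodMk continuous_const)
    have hk := key_bound (fun y => h y t) (fun x => deriv (fun s => h x s) t) (V t)
      (hft t) hftc hpde' (hbc1 t ht) (hbc2 t ht) (hbc3 t ht) (hL2 t ht) (hL2xx t ht)
      (E t) (g t) rfl rfl C S hC hS1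
      ψ ψd ψdd hdψ hdψd hψc hψdc hψddc
      (hψone 0 hS0.le) (hψzero (3*S) (by linarith)) hψpos hψle
      (hψdlow 0 hS0) (hψdhigh (3*S) (by linarith)) hψdb hψddb
      ψ2 ψ2d ψ2dd hdψ2 hdψ2d hψ2c hψ2dc hψ2ddc
      hψ2one (hψ2zero (9*S) (by linarith)) hψ2pos hψ2le
      (hψ2dlow 0 (by linarith)) (hψ2dhigh (9*S) (by linarith)) hψ2ddb
    exact hk
  have hneg : IntervalIntegrable (fun t => -(1 + V t)) volume 0 T := by
    exact (hVint 0 T le_rfl hT0).neg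
  have hWS : IntervalIntegrable (fun t => (1/S) * W t) volume 0 T := by
    exact hWint.const_mul (1/S)
  have hIle : (∫ t in (0:ℝ)..T, ∫ x in (0:ℝ)..(3*S), F x t)
      ≤ ∫ t in (0:ℝ)..T, (-(1 + V t) + (1/S) * W t) := by
    exact intervalIntegral.integral_mono_on hT0 hmarg (hneg.add hWS) hkey
  have hrhs : (∫ t in (0:ℝ)..T, (-(1 + V t) + (1/S) * W t))
      = -(∫ t in (0:ℝ)..T, (1 + V t)) + (1/S) * M := by
    rw [hMdef, intervalIntegral.integral_add hneg hWS, intervalIntegral.integral_neg,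
      intervalIntegral.integral_const_mul]
  have e1 : (∫ x in (0:ℝ)..(3*S), ∫ t in (0:ℝ)..T, F x t)
      = ∫ x in (0:ℝ)..(3*S), ((h x T * h x T) * ψ x - (h x 0 * h x 0) * ψ x) :=
    intervalIntegral.integral_congr (fun x _ => hFTC x)
  have chain : -(E 0) ≤ -(∫ t in (0:ℝ)..T, (1 + V t)) + (1/S) * M := by
    calc -(E 0) ≤ ∫ x in (0:ℝ)..(3*S), ((h x T * h x T) * ψ x - (h x 0 * h x 0) * ψ x) :=
          hlow2
      _ = ∫ x in (0:ℝ)..(3*S), ∫ t in (0:ℝ)..T, F x t := e1.symm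
      _ = ∫ t in (0:ℝ)..T, ∫ x in (0:ℝ)..(3*S), F x t := hswap
      _ ≤ ∫ t in (0:ℝ)..T, (-(1 + V t) + (1/S) * W t) := hIle
      _ = -(∫ t in (0:ℝ)..T, (1 + V t)) + (1/S) * M := hrhs
  linarith
end

section
/- There exists no nonzero function G ∈ H²(ℝ) (with G''' defined classically) solving 4G'''(z) + zG(z) = 0 for all z ∈ ℝ with G(z) > 0 for all z ∈ ℝ and G, G' decaying at ±∞; more precisely, if G is a smooth solution of 4G''' + zG = 0 on ℝ with G, G', G'' → 0 as z → ±∞ and G, G'' ∈ L²(ℝ), then 4∫_ℝ (G'')² dz + (1/2)∫_ℝ G² dz = 0, hence G ≡ 0. -/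
/-!
Multiplying `4G''' + zG = 0` by `G'` shows that `4 G'' G' + z G² / 2` is an antiderivative of
`4 (G'')² + G² / 2`. Integrating over `[-R, R]` and letting the `G'' G'` terms decay,
`R (G(R)² + G(-R)²)` tends to twice the energy `E = 4∫(G'')² + ∫G² / 2`. An integrable function
cannot be bounded below by a multiple of `1/R`, so this limit is `0`; hence `E = 0`, and `G`
vanishes by continuity.
-/

open MeasureTheory Filter Topology

theorem eq_zero_of_integrableOn_Ioi_of_tendsto_mul {f : ℝ → ℝ} {a L : ℝ}
    (hf : IntegrableOn f (Set.Ioi a)) (hlim : Tendsto (fun x => x * f x) atTop (𝓝 L)) :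
    L = 0 := by
  by_contra hL
  have hL2 : 0 < |L| / 2 := by positivity
  obtain ⟨b, hb⟩ := ((hlim.abs.eventually (eventually_gt_nhds (half_lt_self (abs_pos.2 hL)))).and
    (eventually_ge_atTop (max a 1))).exists_forall_of_atTop
  have hinv : IntegrableOn (·⁻¹) (Set.Ioi b) := by
    refine Integrable.mono' ((hf.mono_set fun x hx => ?_).norm.const_mul (|L| / 2)⁻¹)
      (by fun_prop) ((ae_restrict_iff' measurableSet_Ioi).2 (ae_of_all _ fun x hx => ?_))
    · exact lt_of_le_of_lt (le_max_left a 1) (lt_of_le_of_lt (hb b le_rfl).2 hx)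
    · obtain ⟨hxf, hxb⟩ := hb x (le_of_lt hx)
      have hx0 : 0 < x := lt_of_lt_of_le one_pos ((le_max_right a 1).trans hxb)
      rw [abs_mul, abs_of_pos hx0] at hxf
      rw [Real.norm_eq_abs, abs_inv, abs_of_pos hx0, inv_le_iff_one_le_mul₀ hx0]
      calc 1 = (|L| / 2)⁻¹ * (|L| / 2) := (inv_mul_cancel₀ hL2.ne').symm
        _ ≤ (|L| / 2)⁻¹ * (x * |f x|) := by gcongr
        _ = (|L| / 2)⁻¹ * ‖f x‖ * x := by rw [Real.norm_eq_abs]; ring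
  exact not_integrableOn_Ioi_inv hinv

theorem tendsto_sub_comp_neg_integral_of_hasDerivAt {E : Type*} [NormedAddCommGroup E]
    [NormedSpace ℝ E] [CompleteSpace E] {f F : ℝ → E} (hderiv : ∀ x, HasDerivAt F (f x) x)
    (hf : Integrable f) : Tendsto (fun R => F R - F (-R)) atTop (𝓝 (∫ x, f x)) := by
  refine (intervalIntegral_tendsto_integral hf tendsto_neg_atTop_atBot tendsto_id).congr
    fun R => ?_
  exact intervalIntegral.integral_eq_sub_of_hasDerivAt (fun x _ => hderiv x) hf.intervalIntegrable

theorem hasDerivAt_iteratedDeriv {𝕜 F : Type*} [NontriviallyNormedField 𝕜] [NormedAddCommGroup F]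
    [NormedSpace 𝕜 F] {f : 𝕜 → F} {n : WithTop ℕ∞} {k : ℕ} (hf : ContDiff 𝕜 n f) (hk : k < n)
    (x : 𝕜) : HasDerivAt (iteratedDeriv k f) (iteratedDeriv (k + 1) f x) x := by
  rw [iteratedDeriv_succ]
  exact (hf.differentiable_iteratedDeriv k hk x).hasDerivAt

theorem Continuous.eq_zero_of_integral_eq_zero_of_nonneg {X : Type*} [TopologicalSpace X]
    [MeasurableSpace X] {μ : Measure X} [μ.IsOpenPosMeasure] {f : X → ℝ} (hc : Continuous f)
    (hf : 0 ≤ f) (hfi : Integrable f μ) (h : ∫ x, f x ∂μ = 0) : f = 0 :=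
  Measure.eq_of_ae_eq ((integral_eq_zero_iff_of_nonneg hf hfi).1 h) hc continuous_const

theorem hasDerivAt_flux_of_ode {G : ℝ → ℝ} (hG : ContDiff ℝ 3 G) {z : ℝ}
    (hode : 4 * iteratedDeriv 3 G z + z * G z = 0) :
    HasDerivAt (fun z => 4 * iteratedDeriv 2 G z * iteratedDeriv 1 G z + z * G z ^ 2 / 2)
      (4 * iteratedDeriv 2 G z ^ 2 + G z ^ 2 / 2) z := by
  have hG' : HasDerivAt G (iteratedDeriv 1 G z) z := by
    simpa using hasDerivAt_iteratedDeriv hG (k := 0) (by norm_num) z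
  have hG'' := hasDerivAt_iteratedDeriv hG (k := 1) (by norm_num) z
  have hG''' := hasDerivAt_iteratedDeriv hG (k := 2) (by norm_num) z
  refine (((hG'''.const_mul 4).mul hG'').add
    (((hasDerivAt_id z).mul (hG'.pow 2)).div_const 2)).congr_deriv ?_
  simp only [Nat.reduceAdd, Pi.pow_apply, id]
  linear_combination iteratedDeriv 1 G z * hode

/-- No nonzero positive decaying global solution of `4G''' + zG = 0`: if `G` solves the
ODE on ℝ with `G, G', G'' → 0` at `±∞` and `G, G'' ∈ L²(ℝ)`, then
`4∫(G'')² + (1/2)∫G² = 0`, hence `G ≡ 0`. -/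
theorem no_global_decaying_G
    (G : ℝ → ℝ) (hG : ContDiff ℝ 3 G)
    (hode : ∀ z : ℝ, 4 * iteratedDeriv 3 G z + z * G z = 0)
    (hdecay_top : ∀ k ≤ 2, Tendsto (fun z => iteratedDeriv k G z) atTop (𝓝 0))
    (hdecay_bot : ∀ k ≤ 2, Tendsto (fun z => iteratedDeriv k G z) atBot (𝓝 0))
    (hL2 : Integrable (fun z => (G z) ^ 2))
    (hL2'' : Integrable (fun z => (iteratedDeriv 2 G z) ^ 2)) :
    4 * (∫ z : ℝ, (iteratedDeriv 2 G z) ^ 2) + (1/2) * (∫ z : ℝ, (G z) ^ 2) = 0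
      ∧ ∀ z : ℝ, G z = 0 := by
  set E := 4 * (∫ z : ℝ, (iteratedDeriv 2 G z) ^ 2) + (1/2) * (∫ z : ℝ, (G z) ^ 2) with hEdef
  have hE : ∫ z, (4 * iteratedDeriv 2 G z ^ 2 + G z ^ 2 / 2) = E := by
    rw [integral_add (hL2''.const_mul 4) (hL2.div_const 2), integral_const_mul, integral_div]
    ring
  have hflux := hE ▸ tendsto_sub_comp_neg_integral_of_hasDerivAt
    (fun z => hasDerivAt_flux_of_ode hG (hode z)) ((hL2''.const_mul 4).add (hL2.div_const 2))
  have hcross : Tendsto (fun R : ℝ => 4 * iteratedDeriv 2 G R * iteratedDeriv 1 G R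
      - 4 * iteratedDeriv 2 G (-R) * iteratedDeriv 1 G (-R)) atTop (𝓝 0) := by
    have htop := ((hdecay_top 2 le_rfl).const_mul 4).mul (hdecay_top 1 (by norm_num))
    have hbot := (((hdecay_bot 2 le_rfl).const_mul 4).mul (hdecay_bot 1 (by norm_num))).comp
      tendsto_neg_atTop_atBot
    simpa using htop.sub hbot
  have hsym : Tendsto (fun R : ℝ => R * (G R ^ 2 + G (-R) ^ 2)) atTop (𝓝 (2 * E)) := by
    convert (hflux.sub hcross).const_mul 2 using 1
    · funext R; ring
    · rw [sub_zero]
  have hE0 : E = 0 := by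
    have := eq_zero_of_integrableOn_Ioi_of_tendsto_mul (a := 0)
      (hL2.add hL2.comp_neg).integrableOn hsym
    linarith
  have hnonneg₂ : 0 ≤ ∫ z, iteratedDeriv 2 G z ^ 2 := integral_nonneg fun z => sq_nonneg _
  have hnonneg₀ : 0 ≤ ∫ z, G z ^ 2 := integral_nonneg fun z => sq_nonneg _
  have hG0 : (fun z => G z ^ 2) = 0 :=
    Continuous.eq_zero_of_integral_eq_zero_of_nonneg (f := fun z => G z ^ 2) (by fun_prop)
      (fun z => sq_nonneg _) hL2 (by linarith)
  exact ⟨hE0, fun z => pow_eq_zero_iff two_ne_zero |>.1 (congrFun hG0 z)⟩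
end

section
/- Let G : ℝ → ℝ be a smooth solution of 4G'''(z) + zG(z) = 0 such that G(z) > 0 and G is monotonically increasing for all sufficiently large negative z (i.e., G' > 0 near −∞), with G, G', G'' → 0 as z → −∞. Then G'(z) > 0 for all z ≤ 0, i.e., G remains monotonically increasing on (−∞, 0]. -/
/-!
For `z < 0` the equation gives `4G''' = -zG > 0` wherever `G > 0`. So as long as `G` has stayed
positive, `G''` is increasing and tends to `0` at `-∞`, hence is positive; the same argument then
makes `G'` positive, and `G` itself increasing, so `G` cannot reach its first zero on `(-∞, 0]`.
-/

open Filter Topology Set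

theorem pos_of_tendsto_atBot_of_deriv_pos {f : ℝ → ℝ} {t : ℝ} (hf : ContinuousOn f (Iic t))
    (hlim : Tendsto f atBot (𝓝 0)) (hderiv : ∀ x < t, 0 < deriv f x) :
    ∀ y ≤ t, 0 < f y := by
  have hmono : StrictMonoOn f (Iic t) :=
    strictMonoOn_of_deriv_pos (convex_Iic t) hf fun x hx => hderiv x (by simpa using hx)
  intro y hy
  have hprev : y - 1 ∈ Iic t := by simp only [mem_Iic]; linarith
  have hprev_nonneg : 0 ≤ f (y - 1) :=
    le_of_tendsto hlim <| (eventually_le_atBot (y - 1)).mono fun w hw =>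
      hmono.monotoneOn (hw.trans hprev) hprev hw
  linarith [hmono hprev hy (sub_one_lt y)]

theorem pos_on_Iic_of_pos_on_Iio_imp {g : ℝ → ℝ} {b : ℝ} (hg : ContinuousOn g (Iic b))
    (hstart : ∃ M, ∀ y ≤ M, 0 < g y) (hstep : ∀ t ≤ b, (∀ y < t, 0 < g y) → 0 < g t) :
    ∀ y ≤ b, 0 < g y := by
  by_contra! ⟨y, hyb, hgy⟩
  obtain ⟨M, hM⟩ := hstart
  set S := Iic b ∩ g ⁻¹' Iic 0
  have hclosed : IsClosed S := hg.preimage_isClosed_of_isClosed isClosed_Iic isClosed_Iic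
  have hbdd : BddBelow S := ⟨M, fun z hz => le_of_not_ge fun hzM => (hM z hzM).not_ge hz.2⟩
  have hmem : sInf S ∈ S := hclosed.csInf_mem ⟨y, hyb, hgy⟩ hbdd
  refine (hstep _ hmem.1 fun z hz => ?_).not_ge hmem.2
  by_contra! hgz
  exact hz.not_ge (csInf_le hbdd ⟨hz.le.trans hmem.1, hgz⟩)

section ThirdOrderODE

variable {G : ℝ → ℝ}

theorem deriv_deriv_deriv_eq_of_ode (hode : ∀ z : ℝ, 4 * iteratedDeriv 3 G z + z * G z = 0)
    (z : ℝ) : deriv (deriv (deriv G)) z = -(z * G z) / 4 := by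
  have h := hode z
  rw [iteratedDeriv_eq_iterate] at h
  simp only [Function.iterate_succ, Function.iterate_zero, Function.comp_apply, id] at h
  linarith

theorem deriv_pos_of_ode_of_pos_on_Iio (hG : ContDiff ℝ 3 G)
    (hode : ∀ z : ℝ, 4 * iteratedDeriv 3 G z + z * G z = 0)
    (hlim₁ : Tendsto (deriv G) atBot (𝓝 0)) (hlim₂ : Tendsto (deriv (deriv G)) atBot (𝓝 0))
    {t : ℝ} (ht : t ≤ 0) (hpos : ∀ y < t, 0 < G y) : ∀ y ≤ t, 0 < deriv G y := by
  have hcont₁ : Continuous (deriv G) := hG.continuous_deriv (by norm_num)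
  have hcont₂ : Continuous (deriv (deriv G)) :=
    (ContDiff.iterate_deriv' 2 1 hG).continuous_deriv (by norm_num)
  have hsecond : ∀ y ≤ t, 0 < deriv (deriv G) y :=
    pos_of_tendsto_atBot_of_deriv_pos hcont₂.continuousOn hlim₂ fun x hx => by
      rw [deriv_deriv_deriv_eq_of_ode hode]
      nlinarith [hpos x hx]
  exact pos_of_tendsto_atBot_of_deriv_pos hcont₁.continuousOn hlim₁ fun x hx => hsecond x hx.le

end ThirdOrderODE

/-- If `G` solves `4G''' + zG = 0`, is positive and strictly increasing near `-∞`, and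
`G, G', G'' → 0` as `z → -∞`, then `G' > 0` on `(-∞, 0]`. -/
theorem monotone_on_negative_axis
    (G : ℝ → ℝ) (hG : ContDiff ℝ 3 G)
    (hode : ∀ z : ℝ, 4 * iteratedDeriv 3 G z + z * G z = 0)
    (hpos : ∃ M : ℝ, ∀ z ≤ M, 0 < G z ∧ 0 < deriv G z)
    (hdecay : ∀ k ≤ 2, Tendsto (fun z => iteratedDeriv k G z) atBot (𝓝 0)) :
    ∀ z ≤ (0:ℝ), 0 < deriv G z := by
  have hlim : ∀ k ≤ 2, Tendsto (deriv^[k] G) atBot (𝓝 0) := by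
    simpa only [iteratedDeriv_eq_iterate] using hdecay
  have hderiv : ∀ t ≤ 0, (∀ y < t, 0 < G y) → ∀ y ≤ t, 0 < deriv G y := fun t ht =>
    deriv_pos_of_ode_of_pos_on_Iio hG hode (hlim 1 (by norm_num)) (hlim 2 le_rfl) ht
  have hGpos : ∀ y ≤ 0, 0 < G y :=
    pos_on_Iic_of_pos_on_Iio_imp hG.continuous.continuousOn
      (hpos.imp fun _ hM y hy => (hM y hy).1) fun t ht hbelow =>
        pos_of_tendsto_atBot_of_deriv_pos hG.continuous.continuousOn (hlim 0 (by norm_num))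
          (fun x hx => hderiv t ht hbelow x hx.le) t le_rfl
  exact hderiv 0 le_rfl fun y hy => hGpos y hy.le
end

section
/- Let G solve 4G''' + zG = 0 on ℝ with G positive and strictly increasing on (−∞, 0] when written as G̃(z) = G(−z) (i.e., G is positive and decreasing for z ≥ 0 from the right side), and let z₀ < 0 be the largest zero of G. Then G'(z₀) > 0 and G''(z₀) < 0. -/
open Filter Topology

private lemma local_neg_on {f : ℝ → ℝ} (hf : Continuous f) {a : ℝ} (ha : f a < 0) :
    ∃ b > a, ∀ x ∈ Set.Icc a b, f x < 0 := by
  have h : ∀ᶠ x in 𝓝 a, f x < 0 := (hf.continuousAt (x := a)).eventually_lt continuousAt_const ha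
  rcases Metric.eventually_nhds_iff.mp h with ⟨ε, hε, hball⟩
  refine ⟨a + ε/2, by linarith, fun x hx => hball ?_⟩
  rw [Real.dist_eq, abs_lt]
  constructor <;> [linarith [hx.1]; linarith [hx.2]]

private lemma decrease_of_deriv_neg {f : ℝ → ℝ} (hf : Continuous f) (hd : Differentiable ℝ f)
    {a b : ℝ} (hab : a < b) (hneg : ∀ x ∈ Set.Icc a b, deriv f x < 0) : f b < f a := by
  have hs : StrictAntiOn f (Set.Icc a b) :=
    strictAntiOn_of_deriv_neg (convex_Icc a b) hf.continuousOn
      (fun x hx => by rw [interior_Icc] at hx; exact hneg x ⟨hx.1.le, hx.2.le⟩)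
  exact hs ⟨le_refl a, hab.le⟩ ⟨hab.le, le_refl b⟩ hab

/-- At the largest (negative) zero `z₀` of `G`, where `G` solves `4G''' + zG = 0`,
is positive on `(z₀,∞)`, and decays monotonically to `0` at `+∞`, one has
`G'(z₀) > 0` and `G''(z₀) < 0`. -/
theorem signs_at_largest_zero
    (G : ℝ → ℝ) (hG : ContDiff ℝ 3 G)
    (hode : ∀ z : ℝ, 4 * iteratedDeriv 3 G z + z * G z = 0)
    (z₀ : ℝ) (hz₀ : z₀ < 0) (hGz₀ : G z₀ = 0)
    (hpos : ∀ z > z₀, 0 < G z)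
    (hdec : ∀ z ≥ (0:ℝ), deriv G z < 0)
    (hdecay : ∀ k ≤ 2, Tendsto (fun z => iteratedDeriv k G z) atTop (𝓝 0)) :
    0 < deriv G z₀ ∧ iteratedDeriv 2 G z₀ < 0 := by
  have hcont : Continuous G := hG.continuous
  have hdiff : Differentiable ℝ G := hG.differentiable (by norm_num)
  have hG2 : ContDiff ℝ 2 (deriv G) := by
    have := (contDiff_succ_iff_deriv (n := 2)).mp (by exact_mod_cast hG)
    exact this.2.2
  have hG1 : ContDiff ℝ 1 (deriv (deriv G)) := by
    have := (contDiff_succ_iff_deriv (n := 1)).mp (by exact_mod_cast hG2)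
    exact this.2.2
  have hcd : Continuous (deriv G) := hG2.continuous
  have hdd : Differentiable ℝ (deriv G) := hG2.differentiable (by norm_num)
  have hdd2 : Differentiable ℝ (deriv (deriv G)) := hG1.differentiable (by norm_num)
  have e2 : iteratedDeriv 2 G = deriv (deriv G) := by
    rw [iteratedDeriv_succ, iteratedDeriv_one]
  have e3 : iteratedDeriv 3 G = deriv (deriv (deriv G)) := by
    rw [iteratedDeriv_succ, e2]
  have hc2 : Continuous (iteratedDeriv 2 G) := e2 ▸ hG1.continuous
  -- step A : 0 ≤ deriv G z₀
  have hA : 0 ≤ deriv G z₀ := by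
    by_contra h
    push_neg at h
    obtain ⟨b, hb, hneg⟩ := local_neg_on hcd h
    have := decrease_of_deriv_neg hcont hdiff hb hneg
    have := hpos b hb
    linarith [hGz₀ ▸ this]
  -- the ODE gives sign of third derivative
  have hode' : ∀ z : ℝ, iteratedDeriv 3 G z = -(z * G z) / 4 := fun z => by
    have := hode z; linarith
  -- step B : iteratedDeriv 2 G z₀ < 0
  have hB : iteratedDeriv 2 G z₀ < 0 := by
    by_contra h
    push_neg at h
    -- iteratedDeriv 2 G is monotone on [z₀, 0]
    have hmono2 : MonotoneOn (iteratedDeriv 2 G) (Set.Icc z₀ 0) := by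
      apply monotoneOn_of_deriv_nonneg (convex_Icc z₀ 0) hc2.continuousOn
        (fun x hx => (e2 ▸ hdd2 x).differentiableWithinAt)
      intro x hx
      rw [interior_Icc] at hx
      have hxG : 0 ≤ G x := (hpos x hx.1).le
      have hx0 : x ≤ 0 := hx.2.le
      have : deriv (iteratedDeriv 2 G) x = iteratedDeriv 3 G x := by
        rw [e2, ← e3]
      rw [this, hode' x]
      have : x * G x ≤ 0 := mul_nonpos_of_nonpos_of_nonneg hx0 hxG
      linarith
    have h2nn : ∀ x ∈ Set.Icc z₀ 0, 0 ≤ iteratedDeriv 2 G x := fun x hx =>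
      le_trans h (hmono2 (Set.left_mem_Icc.mpr hz₀.le) hx hx.1)
    -- hence deriv G is monotone on [z₀, 0]
    have hmono1 : MonotoneOn (deriv G) (Set.Icc z₀ 0) := by
      apply monotoneOn_of_deriv_nonneg (convex_Icc z₀ 0) hcd.continuousOn
        (fun x hx => (hdd x).differentiableWithinAt)
      intro x hx
      rw [interior_Icc] at hx
      have := h2nn x ⟨hx.1.le, hx.2.le⟩
      rwa [e2] at this
    have : deriv G z₀ ≤ deriv G 0 :=
      hmono1 (Set.left_mem_Icc.mpr hz₀.le) (Set.right_mem_Icc.mpr hz₀.le) hz₀.le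
    linarith [hdec 0 le_rfl]
  refine ⟨?_, hB⟩
  -- step C : deriv G z₀ > 0
  rcases lt_or_eq_of_le hA with h | h
  · exact h
  exfalso
  -- deriv G z₀ = 0 and iteratedDeriv 2 G z₀ < 0 force G negative just right of z₀
  obtain ⟨b, hb, hneg2⟩ := local_neg_on hc2 hB
  -- deriv G < 0 on (z₀, b]
  have hderivneg : ∀ x ∈ Set.Icc z₀ b, x ≠ z₀ → deriv G x < 0 := by
    intro x hx hxne
    have hxgt : z₀ < x := lt_of_le_of_ne hx.1 (Ne.symm hxne)
    have : deriv G x < deriv G z₀ := by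
      apply decrease_of_deriv_neg hcd hdd hxgt
      intro y hy
      have : iteratedDeriv 2 G y < 0 := hneg2 y ⟨hy.1, le_trans hy.2 hx.2⟩
      rwa [e2] at this
    linarith [h ▸ this]
  -- hence G b < G z₀ = 0
  have hGb : G b < G z₀ := by
    have hs : StrictAntiOn G (Set.Icc z₀ b) :=
      strictAntiOn_of_deriv_neg (convex_Icc z₀ b) hcont.continuousOn
        (fun x hx => by
          rw [interior_Icc] at hx
          exact hderivneg x ⟨hx.1.le, hx.2.le⟩ (ne_of_gt hx.1))
    exact hs (Set.left_mem_Icc.mpr hb.le) (Set.right_mem_Icc.mpr hb.le) hb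
  have := hpos b hb
  linarith [hGz₀ ▸ hGb]
end

section
/- Let β : [0, t₀) → ℝ be a C¹ solution of β'(t) = −A(t)/(2β(t)) − B(t), where A, B : [0,t₀) → ℝ are continuous with A(t) → a₄ > 0 and B(t) → a₅ ∈ ℝ as t ↑ t₀, and suppose β(t) → 0 as t ↑ t₀ with β(t) ≠ 0 on [0,t₀). Then β(t)² = a₄(t₀ − t) + o(t₀ − t) as t ↑ t₀. -/
/-!
Put `h(t) = β(t)² + a₄ t`. The equation gives `h' = a₄ - A - 2βB`, which tends to `0` as
`t ↑ t₀`, while `h(t) → a₄ t₀`. By the mean value inequality on `[t, t₀)`,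
`|h(t) - a₄ t₀| ≤ (sup_{[t,t₀)} |h'|) (t₀ - t) = o(t₀ - t)`, which is the claim since
`h(t) - a₄ t₀ = β(t)² - a₄ (t₀ - t)`.
-/

open Filter Topology Set Asymptotics

variable {E : Type*} [NormedAddCommGroup E] [NormedSpace ℝ E]

theorem norm_sub_le_of_norm_hasDerivAt_le_of_tendsto_nhdsLT {f f' : ℝ → E} {t b C : ℝ} {L : E}
    (htb : t < b) (hf : ∀ x ∈ Ico t b, HasDerivAt f (f' x) x)
    (bound : ∀ x ∈ Ico t b, ‖f' x‖ ≤ C) (hL : Tendsto f (𝓝[<] b) (𝓝 L)) :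
    ‖f t - L‖ ≤ C * (b - t) := by
  have hC : 0 ≤ C := (norm_nonneg _).trans (bound t ⟨le_rfl, htb⟩)
  rw [norm_sub_rev]
  refine le_of_tendsto (hL.sub_const (f t)).norm ?_
  filter_upwards [Ioo_mem_nhdsLT htb] with y hy
  calc ‖f y - f t‖ ≤ C * ‖y - t‖ :=
        (convex_Ico t b).norm_image_sub_le_of_norm_hasDerivWithin_le
          (fun x hx => (hf x hx).hasDerivWithinAt) bound ⟨le_rfl, htb⟩ ⟨hy.1.le, hy.2⟩
    _ ≤ C * (b - t) := by
        rw [Real.norm_of_nonneg (by linarith [hy.1])]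
        gcongr
        exact hy.2.le

theorem isLittleO_sub_of_tendsto_nhdsLT_of_hasDerivAt_tendsto_zero
    {f f' : ℝ → E} {b : ℝ} {L : E}
    (hf : ∀ᶠ x in 𝓝[<] b, HasDerivAt f (f' x) x) (hf' : Tendsto f' (𝓝[<] b) (𝓝 0))
    (hL : Tendsto f (𝓝[<] b) (𝓝 L)) :
    (fun t => f t - L) =o[𝓝[<] b] (fun t => b - t) := by
  refine isLittleO_iff.2 fun c hc => ?_
  have hsmall : ∀ᶠ x in 𝓝[<] b, HasDerivAt f (f' x) x ∧ ‖f' x‖ ≤ c :=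
    hf.and (hf'.norm.eventually (ge_mem_nhds (by simpa using hc)))
  obtain ⟨u, hu, hsub⟩ := mem_nhdsLT_iff_exists_Ioo_subset.1 hsmall
  filter_upwards [Ioo_mem_nhdsLT hu] with t ht
  have hIco : Ico t b ⊆ Ioo u b := fun x hx => ⟨ht.1.trans_le hx.1, hx.2⟩
  rw [Real.norm_of_nonneg (sub_nonneg.2 ht.2.le)]
  exact norm_sub_le_of_norm_hasDerivAt_le_of_tendsto_nhdsLT ht.2
    (fun x hx => (hsub (hIco hx)).1) (fun x hx => (hsub (hIco hx)).2) hL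

theorem beta_squared_rate_general
    (t₀ a₄ a₅ : ℝ) (ht₀ : 0 < t₀)
    (β A B : ℝ → ℝ)
    (hAlim : Tendsto A (𝓝[<] t₀) (𝓝 a₄))
    (hBlim : Tendsto B (𝓝[<] t₀) (𝓝 a₅))
    (hβne : ∀ t ∈ Ico (0:ℝ) t₀, β t ≠ 0)
    (hβode : ∀ t ∈ Ico (0:ℝ) t₀, HasDerivAt β (-(A t) / (2 * β t) - B t) t)
    (hβlim : Tendsto β (𝓝[<] t₀) (𝓝 0)) :
    (fun t => (β t) ^ 2 - a₄ * (t₀ - t)) =o[𝓝[<] t₀] (fun t => t₀ - t) := by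
  have hderiv : ∀ᶠ x in 𝓝[<] t₀,
      HasDerivAt (fun x => β x ^ 2 + a₄ * x) (a₄ - A x - 2 * β x * B x) x := by
    filter_upwards [Ico_mem_nhdsLT ht₀] with x hx
    have hβx := hβne x hx
    refine (((hβode x hx).pow 2).add ((hasDerivAt_id x).const_mul a₄)).congr_deriv ?_
    field_simp
    ring
  have hderiv_lim : Tendsto (fun x => a₄ - A x - 2 * β x * B x) (𝓝[<] t₀) (𝓝 0) := by
    simpa using ((tendsto_const_nhds (x := a₄)).sub hAlim).sub ((hβlim.const_mul 2).mul hBlim)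
  have hlim : Tendsto (fun x => β x ^ 2 + a₄ * x) (𝓝[<] t₀) (𝓝 (a₄ * t₀)) := by
    simpa using (hβlim.pow 2).add
      (((continuous_const_mul a₄).tendsto t₀).mono_left nhdsWithin_le_nhds)
  exact (isLittleO_sub_of_tendsto_nhdsLT_of_hasDerivAt_tendsto_zero hderiv hderiv_lim
    hlim).congr_left fun t => by ring

/-- Blow-up rate from the pointwise equation: if `β' = -A/(2β) - B` on `[0,t₀)` with
`A → a₄ > 0`, `B → a₅`, `β → 0` and `β ≠ 0`, then `β(t)² = a₄(t₀-t) + o(t₀-t)` as `t ↑ t₀`. -/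
theorem beta_squared_rate
    (t₀ a₄ a₅ : ℝ) (ht₀ : 0 < t₀) (ha₄ : 0 < a₄)
    (β A B : ℝ → ℝ)
    (hA : ContinuousOn A (Ico 0 t₀)) (hB : ContinuousOn B (Ico 0 t₀))
    (hAlim : Tendsto A (𝓝[<] t₀) (𝓝 a₄))
    (hBlim : Tendsto B (𝓝[<] t₀) (𝓝 a₅))
    (hβne : ∀ t ∈ Ico (0:ℝ) t₀, β t ≠ 0)
    (hβode : ∀ t ∈ Ico (0:ℝ) t₀, HasDerivAt β (-(A t) / (2 * β t) - B t) t)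
    (hβlim : Tendsto β (𝓝[<] t₀) (𝓝 0)) :
    (fun t => (β t) ^ 2 - a₄ * (t₀ - t)) =o[𝓝[<] t₀] (fun t => t₀ - t) :=
  beta_squared_rate_general t₀ a₄ a₅ ht₀ β A B hAlim hBlim hβne hβode hβlim
end
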